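/- arXiv:1509.05444 — 2 statements merged into one kernel-verified Lean document; each statement's English description precedes it below -/
import Mathlib

section
/- There exists R₀ > 1 such that for all R > R₀: for every w ∈ ℂ³ the limit G⁻(w) = lim_{n→∞} 3^{−n} log⁺‖H⁻ⁿ(w)‖ exists; the function G⁻ satisfies G⁻(H⁻¹(w)) = 3·G⁻(w) for all w ∈ ℂ³, and G⁻(w) = 0 if and only if w ∈ K⁻. -/
open Complex Filter Topology

/-- The quadratic automorphism `H(x,y,z) = (xy + az, x² + by, x)` of `ℂ³`. -/
noncomputable def H (a b : ℂ) (w : ℂ × ℂ × ℂ) : ℂ × ℂ × ℂ :=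
  (w.1 * w.2.1 + a * w.2.2, w.1 ^ 2 + b * w.2.1, w.1)

/-- The inverse automorphism
`H⁻¹(x,y,z) = (z, (y − z²)/b, (x − z(y − z²)/b)/a)`. -/
noncomputable def Hinv (a b : ℂ) (w : ℂ × ℂ × ℂ) : ℂ × ℂ × ℂ :=
  (w.2.2, (w.2.1 - w.2.2 ^ 2) / b,
    (w.1 - w.2.2 * ((w.2.1 - w.2.2 ^ 2) / b)) / a)

/-- `V⁺ = {(x,y,z) : |z| > max{R, |x|, (1+δ)|y|^{1/2}}}`. -/
def Vplus (δ R : ℝ) : Set (ℂ × ℂ × ℂ) :=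
  {w | ‖w.2.2‖ >
    max R (max (‖w.1‖) ((1 + δ) * Real.sqrt (‖w.2.1‖)))}

/-- `U⁻ = ⋃_{n≥0} Hⁿ(V⁺)`. -/
noncomputable def Uminus (a b : ℂ) (δ R : ℝ) : Set (ℂ × ℂ × ℂ) :=
  ⋃ n : ℕ, (H a b)^[n] '' Vplus δ R

/-- `K⁻ = ℂ³ \ U⁻`. -/
noncomputable def Kminus (a b : ℂ) (δ R : ℝ) : Set (ℂ × ℂ × ℂ) :=
  (Uminus a b δ R)ᶜ

/-!
On `V⁺` the map `H⁻¹` sends `(x, y, z)` back into `V⁺`, to a point whose last coordinate `z'`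
dominates the other two and satisfies `α |z|³ ≤ |z'| ≤ β |z|³`. So along an orbit that enters
`V⁺` the logarithms `tₙ` of the last coordinates satisfy `|tₙ₊₁ - 3 tₙ| ≤ K`, hence `tₙ / 3ⁿ`
converges to a limit at least `t₀ - K / 2 > log R - K / 2`, which is positive for large `R`.
An orbit that never enters `V⁺` satisfies `‖H⁻ⁿ⁻¹ w‖ ≤ C max(‖H⁻ⁿ w‖, R)²`, so `log ‖H⁻ⁿ w‖`
grows at most like `2ⁿ` and the limit is `0`. The functional equation is a shift of the index.
-/

theorem exists_tendsto_div_pow_of_abs_sub_mul_le {d K : ℝ} {t : ℕ → ℝ} (hd : 1 < d)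
    (ht : ∀ n, |t (n + 1) - d * t n| ≤ K) :
    ∃ L, Tendsto (fun n => t n / d ^ n) atTop (𝓝 L) ∧ t 0 - K / (d - 1) ≤ L := by
  have hd0 : 0 < d := by linarith
  have hr : 1 / d < 1 := (div_lt_one hd0).2 hd
  have hdist n : dist (t n / d ^ n) (t (n + 1) / d ^ (n + 1)) ≤ K / d * (1 / d) ^ n := by
    have : t (n + 1) / d ^ (n + 1) - t n / d ^ n = (t (n + 1) - d * t n) / d ^ (n + 1) := by
      field_simp; ring
    rw [dist_comm, Real.dist_eq, this, abs_div, abs_of_pos (pow_pos hd0 (n + 1))]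
    calc |t (n + 1) - d * t n| / d ^ (n + 1) ≤ K / d ^ (n + 1) := by gcongr; exact ht n
      _ = K / d * (1 / d) ^ n := by rw [one_div_pow, pow_succ]; field_simp
  obtain ⟨L, hL⟩ := cauchySeq_tendsto_of_complete (cauchySeq_of_le_geometric _ _ hr hdist)
  have h0 := dist_le_of_le_geometric_of_tendsto₀ _ _ hr hdist hL
  rw [pow_zero, div_one, Real.dist_eq, show K / d / (1 - 1 / d) = K / (d - 1) by
    field_simp] at h0
  exact ⟨L, hL, by linarith [(abs_sub_le_iff.1 h0).1]⟩

theorem tendsto_log_div_pow_of_le_mul_sq {d C : ℝ} {s : ℕ → ℝ} (hd : 2 < d) (hC : 1 ≤ C)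
    (hs : ∀ n, 1 ≤ s n) (h : ∀ n, s (n + 1) ≤ C * s n ^ 2) :
    Tendsto (fun n => Real.log (s n) / d ^ n) atTop (𝓝 0) := by
  set t := fun n => Real.log (C * s n)
  have hs0 n : 0 < s n := by linarith [hs n]
  have hstep n : t (n + 1) ≤ 2 * t n := by
    calc t (n + 1) ≤ Real.log ((C * s n) ^ 2) := by
          apply Real.log_le_log (by nlinarith [hs0 (n + 1)])
          nlinarith [h n, hs0 (n + 1)]
      _ = 2 * t n := by simp only [t, Real.log_pow]; norm_num
  have hgrowth n : t n ≤ 2 ^ n * t 0 := by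
    induction n with
    | zero => simp
    | succ n ih => rw [pow_succ]; linarith [hstep n]
  have hbound n : Real.log (s n) / d ^ n ≤ t 0 * (2 / d) ^ n := by
    have hlog : Real.log (s n) ≤ t n :=
      Real.log_le_log (hs0 n) (le_mul_of_one_le_left (hs0 n).le hC)
    rw [div_pow, mul_div_assoc', div_le_div_iff_of_pos_right (by positivity)]
    linarith [hgrowth n]
  have hlim : Tendsto (fun n => t 0 * (2 / d) ^ n) atTop (𝓝 0) := by
    simpa using (tendsto_pow_atTop_nhds_zero_of_lt_one (by positivity)
      ((div_lt_one (by linarith)).2 hd)).const_mul (t 0)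
  exact squeeze_zero (fun n => div_nonneg (Real.log_nonneg (hs n)) (by positivity)) hbound hlim

theorem tendsto_div_pow_iterate_of_tendsto {X : Type*} {g : X → X} {φ : X → ℝ} {d L : ℝ}
    {x : X} (k : ℕ) (h : Tendsto (fun n => φ (g^[n] (g^[k] x)) / d ^ n) atTop (𝓝 L)) :
    Tendsto (fun n => φ (g^[n] x) / d ^ n) atTop (𝓝 (L / d ^ k)) := by
  rw [← tendsto_add_atTop_iff_nat k]
  convert h.div_const (d ^ k) using 2 with n
  rw [Function.iterate_add_apply, pow_add, div_div]

theorem abs_log_sub_mul_log_le {x y α β : ℝ} (k : ℕ) (hα : 0 < α) (hx : 0 < x)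
    (hlo : α * x ^ k ≤ y) (hhi : y ≤ β * x ^ k) :
    |Real.log y - k * Real.log x| ≤ max |Real.log α| |Real.log β| := by
  have hxk : 0 < x ^ k := pow_pos hx k
  have hy : 0 < y := lt_of_lt_of_le (mul_pos hα hxk) hlo
  have hβ : 0 < β := pos_of_mul_pos_left (hy.trans_le hhi) hxk.le
  have h1 := Real.log_le_log (mul_pos hα hxk) hlo
  have h2 := Real.log_le_log hy hhi
  rw [Real.log_mul hα.ne' hxk.ne', Real.log_pow] at h1
  rw [Real.log_mul hβ.ne' hxk.ne', Real.log_pow] at h2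
  rw [abs_le]
  constructor <;> linarith [le_abs_self (Real.log β), neg_abs_le (Real.log α),
    le_max_left |Real.log α| |Real.log β|, le_max_right |Real.log α| |Real.log β|]

section
variable {a b : ℂ} {δ R : ℝ}

theorem Hinv_leftInverse_H (ha : a ≠ 0) (hb : b ≠ 0) :
    Function.LeftInverse (Hinv a b) (H a b) := by
  rintro ⟨x, y, z⟩
  simp only [Hinv, H, add_sub_cancel_left, mul_div_cancel_left₀ _ ha, mul_div_cancel_left₀ _ hb]

theorem H_leftInverse_Hinv (ha : a ≠ 0) (hb : b ≠ 0) :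
    Function.LeftInverse (H a b) (Hinv a b) := by
  rintro ⟨x, y, z⟩
  simp only [Hinv, H, mul_div_cancel₀ _ ha, mul_div_cancel₀ _ hb, Prod.mk.injEq, and_true]
  constructor <;> ring

theorem mem_Uminus_iff (ha : a ≠ 0) (hb : b ≠ 0) {w : ℂ × ℂ × ℂ} :
    w ∈ Uminus a b δ R ↔ ∃ n, (Hinv a b)^[n] w ∈ Vplus δ R := by
  simp only [Uminus, Set.mem_iUnion, Set.mem_image]
  constructor
  · rintro ⟨n, v, hv, rfl⟩
    exact ⟨n, by rwa [((Hinv_leftInverse_H ha hb).iterate n) v]⟩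
  · rintro ⟨n, hn⟩
    exact ⟨n, _, hn, (H_leftInverse_Hinv ha hb).iterate n w⟩

theorem mem_Vplus_iff (hδ : 0 ≤ 1 + δ) {w : ℂ × ℂ × ℂ} :
    w ∈ Vplus δ R ↔
      R < ‖w.2.2‖ ∧ ‖w.1‖ < ‖w.2.2‖ ∧ (1 + δ) ^ 2 * ‖w.2.1‖ < ‖w.2.2‖ ^ 2 := by
  simp only [Vplus, Set.mem_ofPred_eq, gt_iff_lt, max_lt_iff]
  rw [show (1 + δ) * √‖w.2.1‖ = √((1 + δ) ^ 2 * ‖w.2.1‖) by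
      rw [Real.sqrt_mul (sq_nonneg _), Real.sqrt_sq hδ],
    Real.sqrt_lt (by positivity) (norm_nonneg _)]

theorem norm_Hinv_snd_fst_le (hb : 1 ≤ ‖b‖) (w : ℂ × ℂ × ℂ) :
    ‖(Hinv a b w).2.1‖ ≤ ‖w.2.1‖ + ‖w.2.2‖ ^ 2 := by
  calc ‖(Hinv a b w).2.1‖ = ‖w.2.1 - w.2.2 ^ 2‖ / ‖b‖ := norm_div _ _
    _ ≤ ‖w.2.1 - w.2.2 ^ 2‖ := div_le_self (norm_nonneg _) hb
    _ ≤ ‖w.2.1‖ + ‖w.2.2‖ ^ 2 := by rw [← norm_pow]; exact norm_sub_le _ _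

theorem norm_Hinv_le_of_Hinv_notMem_Vplus (hδ : 0 ≤ δ) (hb : 1 ≤ ‖b‖) (hR : 1 ≤ R)
    {w : ℂ × ℂ × ℂ} (hw : Hinv a b w ∉ Vplus δ R) :
    ‖Hinv a b w‖ ≤ 2 * (1 + δ) * max ‖w‖ R ^ 2 := by
  set N := max ‖w‖ R
  have hN : 1 ≤ N := hR.trans (le_max_right _ _)
  have hy : ‖w.2.1‖ ≤ N := ((norm_fst_le _).trans (norm_snd_le _)).trans (le_max_left _ _)
  have hz : ‖w.2.2‖ ≤ N := ((norm_snd_le _).trans (norm_snd_le _)).trans (le_max_left _ _)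
  have hN2 : N ≤ 2 * (1 + δ) * N ^ 2 := by nlinarith
  have hv : ‖(Hinv a b w).2.1‖ ≤ 2 * N ^ 2 := by
    nlinarith [norm_Hinv_snd_fst_le (a := a) hb w, norm_nonneg w.2.2]
  have hu : ‖(Hinv a b w).2.2‖ ≤ 2 * (1 + δ) * N ^ 2 := by
    rw [mem_Vplus_iff (by linarith)] at hw
    simp only [not_and_or, not_lt] at hw
    rcases hw with hu | hu | hu
    · exact hu.trans ((le_max_right _ _).trans hN2)
    · exact hu.trans (hz.trans hN2)
    · refine (pow_le_pow_iff_left₀ (norm_nonneg _) (by positivity) two_ne_zero).1 ?_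
      have hN4 : 0 ≤ (1 + δ) ^ 2 * N ^ 2 * (2 * N ^ 2 - 1) := by
        have : 1 ≤ N ^ 2 := one_le_pow₀ hN
        exact mul_nonneg (by positivity) (by linarith)
      nlinarith [mul_le_mul_of_nonneg_left hv (sq_nonneg (1 + δ))]
  simp only [norm_prod_le_iff]
  exact ⟨hz.trans hN2, by nlinarith, hu⟩

theorem tendsto_zero_of_forall_iterate_Hinv_notMem_Vplus (hδ : 0 ≤ δ) (hb : 1 ≤ ‖b‖)
    (hR : 1 ≤ R) {w : ℂ × ℂ × ℂ} (hw : ∀ n, (Hinv a b)^[n] w ∉ Vplus δ R) :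
    Tendsto (fun n : ℕ => max (Real.log ‖(Hinv a b)^[n] w‖) 0 / 3 ^ n) atTop (𝓝 0) := by
  set s := fun n => max ‖(Hinv a b)^[n] w‖ R
  have hs n : 1 ≤ s n := hR.trans (le_max_right _ _)
  have hstep n : s (n + 1) ≤ 2 * (1 + δ) * s n ^ 2 := by
    have hnorm := norm_Hinv_le_of_Hinv_notMem_Vplus hδ hb hR
      (by rw [← Function.iterate_succ_apply' (Hinv a b)]; exact hw (n + 1))
    rw [← Function.iterate_succ_apply' (Hinv a b)] at hnorm
    exact max_le hnorm ((le_max_right _ _).trans (by nlinarith [hs n]))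
  refine squeeze_zero (fun n => div_nonneg (le_max_right _ _) (by positivity)) (fun n => ?_)
    (tendsto_log_div_pow_of_le_mul_sq (d := 3) (by norm_num) (by linarith) hs hstep)
  gcongr
  refine max_le ?_ (Real.log_nonneg (hs n))
  rcases (norm_nonneg ((Hinv a b)^[n] w)).eq_or_lt with h0 | hpos
  · rw [← h0, Real.log_zero]; exact Real.log_nonneg (hs n)
  · exact Real.log_le_log hpos (le_max_left _ _)

theorem norm_Hinv_snd_fst_ge (hδ : 0 < 1 + δ) (hb : ‖b‖ = 1 + δ) {w : ℂ × ℂ × ℂ}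
    (hw : (1 + δ) ^ 2 * ‖w.2.1‖ < ‖w.2.2‖ ^ 2) :
    ((1 + δ) ^ 2 - 1) / (1 + δ) ^ 3 * ‖w.2.2‖ ^ 2 ≤ ‖(Hinv a b w).2.1‖ := by
  have htri : ‖w.2.2‖ ^ 2 - ‖w.2.1‖ ≤ ‖w.2.1 - w.2.2 ^ 2‖ := by
    rw [norm_sub_rev, ← norm_pow]; exact norm_sub_norm_le _ _
  calc ((1 + δ) ^ 2 - 1) / (1 + δ) ^ 3 * ‖w.2.2‖ ^ 2
      ≤ (‖w.2.2‖ ^ 2 - ‖w.2.1‖) / (1 + δ) := by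
        rw [div_mul_eq_mul_div, div_le_div_iff₀ (by positivity) hδ]
        nlinarith [mul_pos hδ (sub_pos.2 hw)]
    _ ≤ ‖w.2.1 - w.2.2 ^ 2‖ / ‖b‖ := by rw [hb]; gcongr
    _ = ‖(Hinv a b w).2.1‖ := (norm_div _ _).symm

theorem norm_mul_norm_Hinv_snd_snd (ha : a ≠ 0) (w : ℂ × ℂ × ℂ) :
    ‖a‖ * ‖(Hinv a b w).2.2‖ = ‖w.1 - w.2.2 * (Hinv a b w).2.1‖ := by
  simp only [Hinv]
  rw [norm_div, mul_div_cancel₀ _ (norm_ne_zero_iff.2 ha)]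

theorem norm_Hinv_snd_fst_le_of_mem_Vplus (hδ : 0 ≤ δ) (hb : 1 ≤ ‖b‖) {w : ℂ × ℂ × ℂ}
    (hw : w ∈ Vplus δ R) : ‖(Hinv a b w).2.1‖ ≤ 2 * ‖w.2.2‖ ^ 2 := by
  obtain ⟨-, -, hy⟩ := (mem_Vplus_iff (by linarith)).1 hw
  have hyZ : ‖w.2.1‖ ≤ ‖w.2.2‖ ^ 2 := by
    nlinarith [mul_nonneg (by nlinarith : 0 ≤ (1 + δ) ^ 2 - 1) (norm_nonneg w.2.1)]
  linarith [norm_Hinv_snd_fst_le (a := a) hb w]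

theorem Hinv_mem_Vplus_of_norm_snd_snd_ge (hδ : 0 ≤ δ) (hb : 1 ≤ ‖b‖) (hR : 1 ≤ R)
    {w : ℂ × ℂ × ℂ} (hw : w ∈ Vplus δ R) (hu : 2 * (1 + δ) * ‖w.2.2‖ ^ 2 ≤ ‖(Hinv a b w).2.2‖) :
    Hinv a b w ∈ Vplus δ R ∧ ‖Hinv a b w‖ = ‖(Hinv a b w).2.2‖ := by
  obtain ⟨hRz, -, hy⟩ := (mem_Vplus_iff (by linarith)).1 hw
  have hZ : 1 < ‖w.2.2‖ := hR.trans_lt hRz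
  have hv := norm_Hinv_snd_fst_le_of_mem_Vplus (a := a) hδ hb hw
  have hvu : 2 * ‖w.2.2‖ ^ 2 ≤ ‖(Hinv a b w).2.2‖ := by nlinarith
  have hz : ‖w.2.2‖ < ‖(Hinv a b w).2.2‖ := by nlinarith
  refine ⟨(mem_Vplus_iff (by linarith)).2 ⟨hRz.trans hz, hz, ?_⟩, ?_⟩
  · have hu2 := pow_le_pow_left₀ (by positivity) hu 2
    have hZ4 : 0 < (1 + δ) ^ 2 * ‖w.2.2‖ ^ 2 * (2 * ‖w.2.2‖ ^ 2 - 1) := by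
      have : 0 < (1 + δ) ^ 2 * ‖w.2.2‖ ^ 2 := by positivity
      exact mul_pos this (by nlinarith)
    nlinarith [mul_le_mul_of_nonneg_left hv (sq_nonneg (1 + δ))]
  · rw [Prod.norm_def, Prod.norm_def, max_eq_right (hv.trans hvu)]
    exact max_eq_right (hz.le : ‖(Hinv a b w).1‖ ≤ _)

theorem exists_cubic_bounds_Hinv (ha : a ≠ 0) (hδ : 0 < δ) (hb : ‖b‖ = 1 + δ) :
    ∃ α > 0, ∃ β > 0, ∃ R₀ ≥ 1, ∀ R ≥ R₀, ∀ w ∈ Vplus δ R,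
      Hinv a b w ∈ Vplus δ R ∧ ‖Hinv a b w‖ = ‖(Hinv a b w).2.2‖ ∧
      α * ‖w.2.2‖ ^ 3 ≤ ‖(Hinv a b w).2.2‖ ∧ ‖(Hinv a b w).2.2‖ ≤ β * ‖w.2.2‖ ^ 3 := by
  have ha' : 0 < ‖a‖ := norm_pos_iff.2 ha
  have hb1 : 1 ≤ ‖b‖ := by rw [hb]; linarith
  set c := ((1 + δ) ^ 2 - 1) / (1 + δ) ^ 3
  have hc : 0 < c := div_pos (by nlinarith) (by positivity)
  set α := c / (2 * ‖a‖)
  have hα : 0 < α := by positivity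
  refine ⟨α, hα, 3 / ‖a‖, by positivity, max 1 (max (2 / c) (2 * (1 + δ) / α)),
    le_max_left _ _, fun R hR w hw => ?_⟩
  obtain ⟨hRz, hx, hy⟩ := (mem_Vplus_iff (by linarith)).1 hw
  set Z := ‖w.2.2‖
  set V := ‖(Hinv a b w).2.1‖
  set U := ‖(Hinv a b w).2.2‖
  have hR₀ : 1 ≤ R := (le_max_left _ _).trans hR
  have hcZ : 2 ≤ c * Z :=
    (div_le_iff₀' hc).1 ((le_max_left _ _).trans ((le_max_right _ _).trans (hR.trans hRz.le)))
  have hαZ : 2 * (1 + δ) ≤ α * Z :=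
    (div_le_iff₀' hα).1 ((le_max_right _ _).trans ((le_max_right _ _).trans (hR.trans hRz.le)))
  have hVlo : c * Z ^ 2 ≤ V := norm_Hinv_snd_fst_ge (by linarith) hb hy
  have hVhi : V ≤ 2 * Z ^ 2 := norm_Hinv_snd_fst_le_of_mem_Vplus hδ.le hb1 hw
  have hUlo : Z * V - ‖w.1‖ ≤ ‖a‖ * U := by
    rw [norm_mul_norm_Hinv_snd_snd ha, norm_sub_rev, ← norm_mul]; exact norm_sub_norm_le _ _
  have hUhi : ‖a‖ * U ≤ ‖w.1‖ + Z * V := by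
    rw [norm_mul_norm_Hinv_snd_snd ha, ← norm_mul]; exact norm_sub_le _ _
  have hlo : α * Z ^ 3 ≤ U := by
    rw [← mul_le_mul_iff_of_pos_left ha', show ‖a‖ * (α * Z ^ 3) = c * Z ^ 3 / 2 by
      simp only [α]; field_simp]
    nlinarith
  have hhi : U ≤ 3 / ‖a‖ * Z ^ 3 := by
    rw [← mul_le_mul_iff_of_pos_left ha', show ‖a‖ * (3 / ‖a‖ * Z ^ 3) = 3 * Z ^ 3 by
      field_simp]
    nlinarith
  have hu : 2 * (1 + δ) * Z ^ 2 ≤ U := by nlinarith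
  obtain ⟨hmem, hnorm⟩ := Hinv_mem_Vplus_of_norm_snd_snd_ge hδ.le hb1 hR₀ hw hu
  exact ⟨hmem, hnorm, hlo, hhi⟩

theorem exists_tendsto_pos_of_mem_Vplus (ha : a ≠ 0) (hδ : 0 < δ) (hb : ‖b‖ = 1 + δ) :
    ∃ R₀ ≥ 1, ∀ R ≥ R₀, ∀ w ∈ Vplus δ R, ∃ L > 0,
      Tendsto (fun n : ℕ => max (Real.log ‖(Hinv a b)^[n] w‖) 0 / 3 ^ n) atTop (𝓝 L) := by
  obtain ⟨α, hα, β, -, R₀, hR₀, hcubic⟩ := exists_cubic_bounds_Hinv ha hδ hb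
  set K := max |Real.log α| |Real.log β|
  refine ⟨max R₀ (Real.exp (K / 2)), le_max_of_le_left hR₀, fun R hR w hw => ?_⟩
  have hRR₀ : R ≥ R₀ := le_of_max_le_left hR
  have hmem n : (Hinv a b)^[n] w ∈ Vplus δ R := by
    induction n with
    | zero => exact hw
    | succ n ih => rw [Function.iterate_succ_apply']; exact (hcubic R hRR₀ _ ih).1
  set Z := fun n => ‖((Hinv a b)^[n] w).2.2‖
  have hRZ n : R < Z n := ((mem_Vplus_iff (by linarith)).1 (hmem n)).1
  have hZ n : 1 < Z n := by linarith [hRZ n]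
  have hlog n : |Real.log (Z (n + 1)) - 3 * Real.log (Z n)| ≤ K := by
    obtain ⟨-, -, hlo, hhi⟩ := hcubic R hRR₀ _ (hmem n)
    rw [← Function.iterate_succ_apply' (Hinv a b)] at hlo hhi
    exact_mod_cast abs_log_sub_mul_log_le 3 hα (by linarith [hZ n]) hlo hhi
  obtain ⟨L, hL, hL0⟩ :=
    exists_tendsto_div_pow_of_abs_sub_mul_le (t := fun n => Real.log (Z n)) (d := 3)
      (by norm_num) hlog
  refine ⟨L, ?_, ?_⟩
  · have : K / 2 < Real.log (Z 0) :=
      calc K / 2 = Real.log (Real.exp (K / 2)) := (Real.log_exp _).symm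
        _ ≤ Real.log R := Real.log_le_log (Real.exp_pos _) (le_of_max_le_right hR)
        _ < Real.log (Z 0) := Real.log_lt_log (by linarith) (hRZ 0)
    norm_num at hL0
    linarith
  · rw [← tendsto_add_atTop_iff_nat 1]
    refine ((tendsto_add_atTop_iff_nat 1).2 hL).congr fun n => ?_
    obtain ⟨-, hnorm, -⟩ := hcubic R hRR₀ _ (hmem n)
    rw [← Function.iterate_succ_apply' (Hinv a b)] at hnorm
    rw [hnorm, max_eq_left (Real.log_nonneg (hZ (n + 1)).le)]

end

/-- there exists `R₀ > 1` such that for all `R > R₀`: for every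
`w ∈ ℂ³` the limit `G⁻(w) = lim 3^{−n} log⁺‖H⁻ⁿ(w)‖` exists; `G⁻` satisfies
`G⁻(H⁻¹(w)) = 3·G⁻(w)`, and `G⁻(w) = 0` iff `w ∈ K⁻`. -/
theorem stmt6 (a b : ℂ) (ha : a ≠ 0) (hb : b ≠ 0) (δ : ℝ) (hδ : 0 < δ)
    (hbδ : ‖b‖ = 1 + δ) :
    ∃ R₀ > (1 : ℝ), ∀ R > R₀, ∃ G : ℂ × ℂ × ℂ → ℝ,
      (∀ w, Tendsto
        (fun n : ℕ => max (Real.log ‖(Hinv a b)^[n] w‖) 0 / 3 ^ n)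
        atTop (nhds (G w))) ∧
      (∀ w, G (Hinv a b w) = 3 * G w) ∧
      (∀ w, G w = 0 ↔ w ∈ Kminus a b δ R) := by
  obtain ⟨R₁, hR₁, hescape⟩ := exists_tendsto_pos_of_mem_Vplus ha hδ hbδ
  refine ⟨R₁ + 1, by linarith, fun R hR => ?_⟩
  set φ : ℂ × ℂ × ℂ → ℝ := fun p => max (Real.log ‖p‖) 0
  have hlimit w : ∃ L, Tendsto (fun n : ℕ => max (Real.log ‖(Hinv a b)^[n] w‖) 0 / 3 ^ n)
      atTop (𝓝 L) ∧ (L = 0 ↔ w ∈ Kminus a b δ R) := by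
    by_cases hU : w ∈ Uminus a b δ R
    · obtain ⟨k, hk⟩ := (mem_Uminus_iff ha hb).1 hU
      obtain ⟨L, hL, hlim⟩ := hescape R (by linarith) _ hk
      exact ⟨L / 3 ^ k, tendsto_div_pow_iterate_of_tendsto (φ := φ) k hlim,
        by simp [Kminus, hU, hL.ne']⟩
    · refine ⟨0, tendsto_zero_of_forall_iterate_Hinv_notMem_Vplus hδ.le (by rw [hbδ]; linarith)
        (by linarith) fun n hn => hU ((mem_Uminus_iff ha hb).2 ⟨n, hn⟩), ?_⟩
      simpa [Kminus] using hU
  choose G hG hG0 using hlimit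
  refine ⟨G, hG, fun w => ?_, hG0⟩
  have hshift := tendsto_div_pow_iterate_of_tendsto (φ := φ) 1 (hG (Hinv a b w))
  rw [tendsto_nhds_unique (hG w) hshift]
  ring
end

section
/- There exist ε > 0 and R₀ > 1/ε¹⁰ such that for all R > R₀: if w ∈ K⁺ and (nᵢ) is a strictly increasing sequence of integers such that the points [x_{nᵢ} : y_{nᵢ} : z_{nᵢ} : 1] converge in ℙ³ to a point p lying on the hyperplane at infinity {t = 0} (equivalently, the orbit Hⁿ(w) is unbounded along (nᵢ)), then p = [1:0:0:0] or p = [0:1:0:0]. -/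
open Complex Filter Topology

/-- The quotient topology on the projectivization `ℙ³ = ℙ(ℂ⁴)`, induced from
`ℂ⁴ \ {0}`; this is the standard topology of complex projective space. -/
noncomputable instance : TopologicalSpace (Projectivization ℂ (Fin 4 → ℂ)) :=
  instTopologicalSpaceQuotient

/-- `V⁻ = {(x,y,z) : |xy| > max{R, 2|az|, |x|^{3/2}, (1/ε)|y|^{3/2}}}`. -/
noncomputable def Vminus (a : ℂ) (ε R : ℝ) : Set (ℂ × ℂ × ℂ) :=
  {w | ‖w.1 * w.2.1‖ >
    max R (max (2 * ‖a * w.2.2‖)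
      (max (‖w.1‖ ^ ((3 : ℝ) / 2))
        ((1 / ε) * ‖w.2.1‖ ^ ((3 : ℝ) / 2))))}

/-- `U⁺ = ⋃_{n≥0} H⁻ⁿ(V⁻)`, i.e. the points whose forward orbit meets `V⁻`. -/
noncomputable def Uplus (a b : ℂ) (ε R : ℝ) : Set (ℂ × ℂ × ℂ) :=
  ⋃ n : ℕ, (H a b)^[n] ⁻¹' Vminus a ε R

/-- `K⁺ = ℂ³ \ U⁺`. -/
noncomputable def Kplus (a b : ℂ) (ε R : ℝ) : Set (ℂ × ℂ × ℂ) :=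
  (Uplus a b ε R)ᶜ

/-- The embedding `ℂ³ → ℙ³`, `(x,y,z) ↦ [x:y:z:1]`. -/
noncomputable def embed (w : ℂ × ℂ × ℂ) : Projectivization ℂ (Fin 4 → ℂ) :=
  Projectivization.mk ℂ ![w.1, w.2.1, w.2.2, 1] (by
    intro h
    simpa using congrFun h 3)

/-!
Write `m = ‖(x, y, z, 1)‖_∞` along the orbit. If both `x` and `y` survive in the limit, then
`|xy| ≳ m²` beats each of the four quantities defining `V⁻`, so the orbit enters `V⁻`.
If `z` survives, then `z_n = x_{n-1}` is large while `|y_n| ≲ |x_{n-1}|`, which forces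
`|b y_{n-1}| ≈ |x_{n-1}|²`. This parabola condition propagates backwards along an orbit avoiding
`V⁻`: with `|b y| ≈ |x|²`, the only term of `V⁻` that `|xy|` can fail to beat is `2|az|`, and
`|x_n y_n| ≤ 2|a x_{n-1}|` makes `|x_{n-1}|` much larger than `|x_n|`. Hence it would hold at
time `0` with `|x_0|` arbitrarily large.
-/

lemma rpow_three_halves {x : ℝ} (hx : 0 ≤ x) : x ^ ((3 : ℝ) / 2) = x * √x := by
  rw [show (3 : ℝ) / 2 = 1 + 1 / 2 by norm_num, Real.rpow_add' hx (by norm_num), Real.rpow_one,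
    ← Real.sqrt_eq_rpow]

section Dynamics

variable {a b : ℂ} {ε R T : ℝ} {v w : ℂ × ℂ × ℂ}

lemma mem_Vminus_iff :
    v ∈ Vminus a ε R ↔ R < ‖v.1‖ * ‖v.2.1‖ ∧ 2 * (‖a‖ * ‖v.2.2‖) < ‖v.1‖ * ‖v.2.1‖ ∧
      ‖v.1‖ * √‖v.1‖ < ‖v.1‖ * ‖v.2.1‖ ∧ ε⁻¹ * (‖v.2.1‖ * √‖v.2.1‖) < ‖v.1‖ * ‖v.2.1‖ := by
  simp only [Vminus, Set.mem_ofPred_eq, gt_iff_lt, max_lt_iff, norm_mul, one_div,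
    rpow_three_halves (norm_nonneg _)]

lemma mem_Kplus_iff : w ∈ Kplus a b ε R ↔ ∀ n, (H a b)^[n] w ∉ Vminus a ε R := by
  simp [Kplus, Uplus]

lemma notMem_Vminus_of_mem_Kplus (hw : w ∈ Kplus a b ε R) : w ∉ Vminus a ε R :=
  mem_Kplus_iff.1 hw 0

lemma H_mem_Kplus (hw : w ∈ Kplus a b ε R) : H a b w ∈ Kplus a b ε R :=
  mem_Kplus_iff.2 fun n => by
    rw [← Function.iterate_succ_apply]
    exact mem_Kplus_iff.1 hw (n + 1)

def NearParabola (b : ℂ) (T : ℝ) (v : ℂ × ℂ × ℂ) : Prop :=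
  T ≤ ‖v.1‖ ∧ ‖v.1‖ ^ 2 ≤ 2 * ‖b‖ * ‖v.2.1‖ ∧ ‖b‖ * ‖v.2.1‖ ≤ 2 * ‖v.1‖ ^ 2

lemma nearParabola_of_norm_H_snd_le (hT : T ≤ ‖v.1‖) (hy : ‖(H a b v).2.1‖ ≤ ‖v.1‖ ^ 2 / 2) :
    NearParabola b T v := by
  have hby : ‖b‖ * ‖v.2.1‖ = ‖(H a b v).2.1 - v.1 ^ 2‖ := by
    rw [← norm_mul]
    simp [H]
  have hlow : ‖v.1‖ ^ 2 - ‖(H a b v).2.1‖ ≤ ‖b‖ * ‖v.2.1‖ := by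
    rw [hby, norm_sub_rev, ← norm_pow]
    exact norm_sub_norm_le _ _
  have hup : ‖b‖ * ‖v.2.1‖ ≤ ‖(H a b v).2.1‖ + ‖v.1‖ ^ 2 := by
    rw [hby, ← norm_pow]
    exact norm_sub_le _ _
  exact ⟨hT, by linarith, by linarith⟩

/-- Once `|x| ≥ T`, the first three summands let `|xy|` beat `R` and `|x|^{3/2}`, and the last two
force `|x_{n-1}| ≥ |x_n|` and `|y_n| ≤ |x_{n-1}|² / 2` in `NearParabola.of_H`. -/
noncomputable def parabolaThreshold (a b : ℂ) (R : ℝ) : ℝ :=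
  1 + |R| + 2 * ‖b‖ + 4 * ‖a‖ * ‖b‖ + 64 * ‖a‖ ^ 2 * ‖b‖

lemma NearParabola.of_H (ha : a ≠ 0) (hb : b ≠ 0) (hε₀ : 0 < ε) (hε : 2 < ‖b‖ * ε ^ 2)
    (hT : parabolaThreshold a b R ≤ T) (hv : H a b v ∉ Vminus a ε R)
    (hd : NearParabola b T (H a b v)) : NearParabola b T v := by
  obtain ⟨hX, hXY, hYX⟩ := hd
  set X := ‖(H a b v).1‖
  set Y := ‖(H a b v).2.1‖
  set X' := ‖v.1‖
  have hz : ‖(H a b v).2.2‖ = X' := rfl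
  have ha0 : 0 < ‖a‖ := norm_pos_iff.2 ha
  have hb0 : 0 < ‖b‖ := norm_pos_iff.2 hb
  have hTX : parabolaThreshold a b R ≤ X := hT.trans hX
  unfold parabolaThreshold at hTX
  have hab : 0 ≤ 4 * ‖a‖ * ‖b‖ := by positivity
  have hab' : 0 ≤ 64 * ‖a‖ ^ 2 * ‖b‖ := by positivity
  have hXR : |R| < X := by linarith [abs_nonneg R]
  have hXb : 2 * ‖b‖ < X := by linarith [abs_nonneg R]
  have hXa : 4 * ‖a‖ * ‖b‖ + 64 * ‖a‖ ^ 2 * ‖b‖ ≤ X := by linarith [abs_nonneg R]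
  have hX1 : 1 ≤ X := by linarith [abs_nonneg R]
  have hX0 : 0 < X := by linarith
  have hXltY : X < Y := lt_of_mul_lt_mul_left (by nlinarith) (by positivity : 0 ≤ 2 * ‖b‖)
  have hXY_le : X * Y ≤ 2 * (‖a‖ * X') := by
    rw [mem_Vminus_iff, hz] at hv
    by_contra! hlt
    refine hv ⟨by nlinarith [le_abs_self R], hlt, ?_, ?_⟩
    · have : √X ≤ X := (Real.sqrt_le_left hX0.le).2 (by nlinarith)
      nlinarith
    · have hsY : √Y < ε * X := by
        rw [Real.sqrt_lt' (by positivity)]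
        exact lt_of_mul_lt_mul_left
          (by nlinarith [mul_lt_mul_of_pos_right hε (pow_pos hX0 2)]) hb0.le
      calc ε⁻¹ * (Y * √Y) < ε⁻¹ * (Y * (ε * X)) := by gcongr; linarith
        _ = X * Y := by field_simp
  have hX3 : X ^ 3 ≤ 4 * ‖a‖ * ‖b‖ * X' := by nlinarith
  have hXX' : X ≤ X' := le_of_mul_le_mul_left (by nlinarith) (by positivity : 0 < 4 * ‖a‖ * ‖b‖)
  have hX'sq : 4 * X ^ 2 ≤ ‖b‖ * X' ^ 2 := by
    have h6 : X ^ 6 ≤ (4 * ‖a‖ * ‖b‖ * X') ^ 2 := by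
      rw [show X ^ 6 = (X ^ 3) ^ 2 by ring]
      exact pow_le_pow_left₀ (by positivity) hX3 2
    have h4 : 64 * ‖a‖ ^ 2 * ‖b‖ ≤ X ^ 4 := by nlinarith [one_le_pow₀ (n := 3) hX1]
    refine le_of_mul_le_mul_left ?_ (by positivity : 0 < 16 * ‖a‖ ^ 2 * ‖b‖)
    nlinarith
  have hY' : Y ≤ X' ^ 2 / 2 := by
    rw [le_div_iff₀ two_pos]
    exact le_of_mul_le_mul_left (by nlinarith) hb0
  exact nearParabola_of_norm_H_snd_le (hX.trans hXX') hY'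

lemma NearParabola.of_iterate (ha : a ≠ 0) (hb : b ≠ 0) (hε₀ : 0 < ε) (hε : 2 < ‖b‖ * ε ^ 2)
    (hT : parabolaThreshold a b R ≤ T) (hw : w ∈ Kplus a b ε R) (n : ℕ)
    (hn : NearParabola b T ((H a b)^[n] w)) : NearParabola b T w := by
  induction n generalizing w with
  | zero => exact hn
  | succ n ih =>
    have hHw := H_mem_Kplus hw
    rw [Function.iterate_succ_apply] at hn
    exact (ih hHw hn).of_H ha hb hε₀ hε hT (notMem_Vminus_of_mem_Kplus hHw)

lemma exists_sq_norm_fst_lt_of_mem_Kplus (ha : a ≠ 0) (hb : b ≠ 0) (hε₀ : 0 < ε)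
    (hε : 2 < ‖b‖ * ε ^ 2) (hw : w ∈ Kplus a b ε R) :
    ∃ T, ∀ n, T ≤ ‖((H a b)^[n] w).1‖ →
      ‖((H a b)^[n] w).1‖ ^ 2 < 2 * ‖(H a b ((H a b)^[n] w)).2.1‖ := by
  refine ⟨max (parabolaThreshold a b R) (‖w.1‖ + 1), fun n hn => ?_⟩
  by_contra! hy
  have hnear : NearParabola b (max (parabolaThreshold a b R) (‖w.1‖ + 1)) ((H a b)^[n] w) :=
    nearParabola_of_norm_H_snd_le (a := a) hn (by linarith)
  have hw1 := (hnear.of_iterate ha hb hε₀ hε (le_max_left _ _) hw).1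
  linarith [le_max_right (parabolaThreshold a b R) (‖w.1‖ + 1)]

end Dynamics

section Projective

noncomputable def homCoords (w : ℂ × ℂ × ℂ) : Fin 4 → ℂ := ![w.1, w.2.1, w.2.2, 1]

lemma one_le_norm_homCoords (w : ℂ × ℂ × ℂ) : 1 ≤ ‖homCoords w‖ := by
  simpa [homCoords] using norm_le_pi_norm (homCoords w) 3

noncomputable def coordRatio (j : Fin 4) : Projectivization ℂ (Fin 4 → ℂ) → ℝ :=
  Projectivization.lift (fun v => ‖v.1 j‖ / ‖v.1‖) (by
    rintro ⟨-, -⟩ ⟨u, hu⟩ t rfl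
    have ht : t ≠ 0 := by rintro rfl; simp_all
    simp only [Pi.smul_apply, norm_smul]
    exact mul_div_mul_left _ _ (norm_ne_zero_iff.2 ht))

lemma continuous_coordRatio (j : Fin 4) : Continuous (coordRatio j) :=
  Continuous.quotient_lift
    (((continuous_apply j).comp continuous_subtype_val).norm.div continuous_subtype_val.norm
      fun v => norm_ne_zero_iff.2 v.2) _

lemma coordRatio_rep (j : Fin 4) (p : Projectivization ℂ (Fin 4 → ℂ)) :
    coordRatio j p = ‖p.rep j‖ / ‖p.rep‖ := by
  conv_lhs => rw [← p.mk_rep]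
  rfl

lemma coordRatio_embed (j : Fin 4) (w : ℂ × ℂ × ℂ) :
    coordRatio j (embed w) = ‖homCoords w j‖ / ‖homCoords w‖ :=
  rfl

variable {ι : Type*} {l : Filter ι} {u : ι → ℂ × ℂ × ℂ} {p : Projectivization ℂ (Fin 4 → ℂ)}

lemma tendsto_norm_homCoords_atTop (hp : Tendsto (fun i => embed (u i)) l (𝓝 p))
    (hp3 : p.rep 3 = 0) : Tendsto (fun i => ‖homCoords (u i)‖) l atTop := by
  have h := ((continuous_coordRatio 3).tendsto p).comp hp
  simp only [Function.comp_def, coordRatio_embed] at h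
  rw [coordRatio_rep, hp3, norm_zero, zero_div] at h
  have hinv : Tendsto (fun i => ‖homCoords (u i)‖⁻¹) l (𝓝[>] 0) :=
    tendsto_nhdsWithin_iff.2 ⟨by simpa [homCoords] using h,
      Eventually.of_forall fun i => inv_pos.2 (one_pos.trans_le (one_le_norm_homCoords _))⟩
  simpa only [Function.comp_def, inv_inv] using tendsto_inv_nhdsGT_zero.comp hinv

lemma exists_eventually_mul_norm_homCoords_lt (hp : Tendsto (fun i => embed (u i)) l (𝓝 p))
    {j : Fin 4} (hj : p.rep j ≠ 0) :
    ∃ c > 0, ∀ᶠ i in l, c * ‖homCoords (u i)‖ < ‖homCoords (u i) j‖ := by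
  have hpos : 0 < coordRatio j p := by
    rw [coordRatio_rep]
    exact div_pos (norm_pos_iff.2 hj) (norm_pos_iff.2 p.rep_nonzero)
  refine ⟨coordRatio j p / 2, half_pos hpos, ?_⟩
  filter_upwards [(((continuous_coordRatio j).tendsto p).comp hp).eventually_const_lt
    (half_lt_self hpos)] with i hi
  rwa [Function.comp_apply, coordRatio_embed,
    lt_div_iff₀ (one_pos.trans_le (one_le_norm_homCoords _))] at hi

lemma eventually_mem_Vminus {a : ℂ} {ε R c : ℝ} (hε : 1 ≤ ε) (hc : 0 < c)
    (hm : Tendsto (fun i => ‖homCoords (u i)‖) l atTop)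
    (hxy : ∀ᶠ i in l, c * ‖homCoords (u i)‖ ^ 2 ≤ ‖(u i).1‖ * ‖(u i).2.1‖) :
    ∀ᶠ i in l, u i ∈ Vminus a ε R := by
  filter_upwards [hxy, hm.eventually_ge_atTop 1, hm.eventually_gt_atTop (R / c),
    hm.eventually_gt_atTop (2 * ‖a‖ / c), hm.eventually_gt_atTop (1 / c ^ 2)]
    with i hxy hm1 hmR hma hmc
  set m := ‖homCoords (u i)‖
  have hx : ‖(u i).1‖ ≤ m := norm_le_pi_norm (homCoords (u i)) 0
  have hy : ‖(u i).2.1‖ ≤ m := norm_le_pi_norm (homCoords (u i)) 1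
  have hz : ‖(u i).2.2‖ ≤ m := norm_le_pi_norm (homCoords (u i)) 2
  rw [div_lt_iff₀ hc] at hmR hma
  rw [div_lt_iff₀ (by positivity)] at hmc
  have hsqrt : m * √m < c * m ^ 2 := by
    have : √m < c * m := (Real.sqrt_lt' (by positivity)).2 (by nlinarith)
    nlinarith
  have hpow {t : ℝ} (ht : t ≤ m) (ht0 : 0 ≤ t) : t * √t ≤ m * √m :=
    mul_le_mul ht (Real.sqrt_le_sqrt ht) (Real.sqrt_nonneg _) (by linarith)
  rw [mem_Vminus_iff]
  refine ⟨by nlinarith, by nlinarith [norm_nonneg a], by linarith [hpow hx (norm_nonneg _)], ?_⟩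
  have hε' : ε⁻¹ ≤ 1 := inv_le_one_of_one_le₀ hε
  nlinarith [hpow hy (norm_nonneg _),
    mul_nonneg (norm_nonneg (u i).2.1) (Real.sqrt_nonneg ‖(u i).2.1‖)]

end Projective

lemma Projectivization.eq_mk_of_rep_eq_smul {K V : Type*} [DivisionRing K] [AddCommGroup V]
    [Module K V] {p : Projectivization K V} {v : V} (hv : v ≠ 0) (c : K) (h : p.rep = c • v) :
    p = Projectivization.mk K v hv := by
  rw [← p.mk_rep, Projectivization.mk_eq_mk_iff']
  exact ⟨c, h.symm⟩

section Limits

variable {a b : ℂ} {ε R : ℝ} {w : ℂ × ℂ × ℂ} {ni : ℕ → ℕ} {p : Projectivization ℂ (Fin 4 → ℂ)}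

lemma rep_zero_eq_zero_or_rep_one_eq_zero (hε : 1 ≤ ε) (hw : w ∈ Kplus a b ε R)
    (hp : Tendsto (fun i => embed ((H a b)^[ni i] w)) atTop (𝓝 p)) (hp3 : p.rep 3 = 0) :
    p.rep 0 = 0 ∨ p.rep 1 = 0 := by
  by_contra! h
  obtain ⟨c₀, hc₀, hx⟩ := exists_eventually_mul_norm_homCoords_lt hp h.1
  obtain ⟨c₁, hc₁, hy⟩ := exists_eventually_mul_norm_homCoords_lt hp h.2
  have hxy : ∀ᶠ i in atTop, c₀ * c₁ * ‖homCoords ((H a b)^[ni i] w)‖ ^ 2 ≤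
      ‖((H a b)^[ni i] w).1‖ * ‖((H a b)^[ni i] w).2.1‖ := by
    filter_upwards [hx, hy] with i hxi hyi
    calc c₀ * c₁ * ‖homCoords ((H a b)^[ni i] w)‖ ^ 2
        = (c₀ * ‖homCoords ((H a b)^[ni i] w)‖) * (c₁ * ‖homCoords ((H a b)^[ni i] w)‖) := by ring
      _ ≤ _ := mul_le_mul hxi.le hyi.le (by positivity) (norm_nonneg _)
  obtain ⟨i, hi⟩ := (eventually_mem_Vminus hε (mul_pos hc₀ hc₁)
    (tendsto_norm_homCoords_atTop hp hp3) hxy).exists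
  exact mem_Kplus_iff.1 hw (ni i) hi

lemma rep_two_eq_zero (ha : a ≠ 0) (hb : b ≠ 0) (hε₀ : 0 < ε) (hε : 2 < ‖b‖ * ε ^ 2)
    (hw : w ∈ Kplus a b ε R) (hni : Tendsto ni atTop atTop)
    (hp : Tendsto (fun i => embed ((H a b)^[ni i] w)) atTop (𝓝 p)) (hp3 : p.rep 3 = 0) :
    p.rep 2 = 0 := by
  by_contra h2
  obtain ⟨T, hT⟩ := exists_sq_norm_fst_lt_of_mem_Kplus ha hb hε₀ hε hw
  obtain ⟨c, hc, hcz⟩ := exists_eventually_mul_norm_homCoords_lt hp h2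
  have hz : Tendsto (fun i => ‖homCoords ((H a b)^[ni i] w) 2‖) atTop atTop :=
    tendsto_atTop_mono' _ (hcz.mono fun i hi => hi.le)
      ((tendsto_norm_homCoords_atTop hp hp3).const_mul_atTop hc)
  obtain ⟨i, hzi, hci, hi⟩ := ((hz.eventually_ge_atTop (max T (2 / c))).and
    (hcz.and (hni.eventually_ge_atTop 1))).exists
  obtain ⟨k, hk⟩ := Nat.exists_eq_add_of_le' hi
  rw [hk, Function.iterate_succ_apply'] at hzi hci
  set v := (H a b)^[k] w
  change max T (2 / c) ≤ ‖v.1‖ at hzi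
  change _ < ‖v.1‖ at hci
  have hy : ‖(H a b v).2.1‖ ≤ ‖homCoords (H a b v)‖ :=
    norm_le_pi_norm (homCoords (H a b v)) 1
  have hsq : ‖v.1‖ ^ 2 < 2 * ‖(H a b v).2.1‖ := hT k (le_of_max_le_left hzi)
  have h2c : 2 ≤ c * ‖v.1‖ := (div_le_iff₀' hc).1 (le_of_max_le_right hzi)
  nlinarith [mul_lt_mul_of_pos_left hsq hc, mul_le_mul_of_nonneg_left hy hc.le,
    mul_le_mul_of_nonneg_right h2c (norm_nonneg v.1)]

end Limits

/-- there exist `ε > 0` and `R₀ > 1/ε¹⁰` such that for all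
`R > R₀`: if `w ∈ K⁺` and `(nᵢ)` is a strictly increasing sequence of
integers such that `[x_{nᵢ} : y_{nᵢ} : z_{nᵢ} : 1]` converges in `ℙ³` to a
point `p` on the hyperplane at infinity `{t = 0}`, then `p = [1:0:0:0]` or
`p = [0:1:0:0]`. -/
theorem stmt16 (a b : ℂ) (ha : a ≠ 0) (hb : b ≠ 0) :
    ∃ ε > (0 : ℝ), ∃ R₀ > 1 / ε ^ 10, ∀ R > R₀, ∀ w ∈ Kplus a b ε R,
      ∀ ni : ℕ → ℕ, StrictMono ni →
      ∀ p : Projectivization ℂ (Fin 4 → ℂ),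
        Tendsto (fun i : ℕ => embed ((H a b)^[ni i] w)) atTop (nhds p) →
        p.rep 3 = 0 →
        p = Projectivization.mk ℂ ![1, 0, 0, 0] (by
              intro h; simpa using congrFun h 0) ∨
        p = Projectivization.mk ℂ ![0, 1, 0, 0] (by
              intro h; simpa using congrFun h 1) := by
  have hb0 : 0 < ‖b‖ := norm_pos_iff.2 hb
  set ε := 1 + 2 / ‖b‖
  have hε1 : 1 ≤ ε := le_add_of_nonneg_right (by positivity)
  have hε : 2 < ‖b‖ * ε ^ 2 := by
    have : ‖b‖ * ε = ‖b‖ + 2 := by simp only [ε]; field_simp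
    nlinarith
  refine ⟨ε, by positivity, 1 / ε ^ 10 + 1, lt_add_one _, fun R _ w hw ni hni p hp hp3 => ?_⟩
  have h2 := rep_two_eq_zero ha hb (by positivity) hε hw hni.tendsto_atTop hp hp3
  rcases rep_zero_eq_zero_or_rep_one_eq_zero hε1 hw hp hp3 with h0 | h1
  · exact Or.inr (Projectivization.eq_mk_of_rep_eq_smul _ (p.rep 1) (by
      ext i; fin_cases i <;> simp [h0, h2, hp3]))
  · exact Or.inl (Projectivization.eq_mk_of_rep_eq_smul _ (p.rep 0) (by
      ext i; fin_cases i <;> simp [h1, h2, hp3]))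
end
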